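/- arXiv:2506.12857 — 3 statements merged into one kernel-verified Lean document; each statement's English description precedes it below -/
import Mathlib

section
/- For integers m ≥ 2 and n ≥ 0, the sum over all m-tuples (n_1,...,n_m) of nonnegative integers with Σ n_i = n of the value n_1² equals binomial(m+n-1, m+1) + binomial(m+n, m+1). -/
/-!
Fixing the first coordinate `f 0 = i` leaves the tuples of length `m - 1` summing to `n - i`, of
which there are `C(n - i + m - 2, m - 2)`. An upper-index Vandermonde identity then gives
`∑_f C(f 0, a) = C(n + m - 1, a + m - 1)`, and the theorem follows from
`x² = C(x, 1) + 2 C(x, 2)` and Pascal's rule.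
-/

open Finset

theorem Nat.sq_eq_choose_one_add_two_mul_choose_two (x : ℕ) :
    x ^ 2 = x.choose 1 + 2 * x.choose 2 := by
  induction x with
  | zero => rfl
  | succ x ih =>
    rw [Nat.choose_succ_succ' x 1, Nat.choose_one_right, Nat.choose_one_right, add_sq, ih,
      Nat.choose_one_right]
    ring

namespace Finset.Nat

theorem sum_antidiagonal_choose_mul_add_choose (k : ℕ) : ∀ n a : ℕ,
    ∑ p ∈ antidiagonal n, p.1.choose a * (p.2 + k).choose k = (n + k + 1).choose (a + k + 1)
  | 0, 0 => by simp
  | 0, a + 1 => by simp [Nat.choose_eq_zero_of_lt]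
  | n + 1, 0 => by
    have ih := sum_antidiagonal_choose_mul_add_choose k n 0
    simp only [Nat.choose_zero_right, one_mul, zero_add] at ih ⊢
    rw [sum_antidiagonal_succ, ih, add_right_comm n 1 k, Nat.choose_succ_succ' (n + k + 1)]
  | n + 1, a + 1 => by
    rw [sum_antidiagonal_succ, Nat.choose_zero_succ, zero_mul, zero_add]
    simp only [Nat.choose_succ_succ' _ a, add_mul, sum_add_distrib,
      sum_antidiagonal_choose_mul_add_choose k n a,
      sum_antidiagonal_choose_mul_add_choose k n (a + 1)]
    rw [add_right_comm n 1 k, add_right_comm a 1 k, Nat.choose_succ_succ' (n + k + 1)]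

theorem sum_antidiagonalTuple_succ {M : Type*} [AddCommMonoid M] (k n : ℕ)
    (g : (Fin (k + 1) → ℕ) → M) :
    ∑ f ∈ antidiagonalTuple (k + 1) n, g f =
      ∑ p ∈ antidiagonal n, ∑ h ∈ antidiagonalTuple k p.2, g (Fin.cons p.1 h) := by
  rw [sum_sigma']
  refine sum_bij' (fun f _ => ⟨(f 0, n - f 0), Fin.tail f⟩)
    (fun x _ => Fin.cons x.1.1 x.2) ?_ ?_ (fun _ _ => by simp) ?_ (fun _ _ => by simp)
  · intro f hf
    rw [mem_antidiagonalTuple, Fin.sum_univ_succ] at hf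
    simp [mem_antidiagonalTuple, ← hf, Fin.tail]
  · rintro ⟨⟨a, b⟩, h⟩ hx
    simp only [mem_sigma, HasAntidiagonal.mem_antidiagonal, mem_antidiagonalTuple] at hx
    simp [mem_antidiagonalTuple, Fin.sum_univ_succ, hx.2, hx.1]
  · rintro ⟨⟨a, b⟩, h⟩ hx
    simp only [mem_sigma, HasAntidiagonal.mem_antidiagonal] at hx
    simp [← hx.1]

theorem sum_antidiagonalTuple_apply_zero {M : Type*} [AddCommMonoid M] (k n : ℕ) (g : ℕ → M) :
    ∑ f ∈ antidiagonalTuple (k + 1) n, g (f 0) =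
      ∑ p ∈ antidiagonal n, #(antidiagonalTuple k p.2) • g p.1 := by
  simp [sum_antidiagonalTuple_succ]

theorem sum_antidiagonalTuple_choose_apply_zero (k n a : ℕ) :
    ∑ f ∈ antidiagonalTuple (k + 1) n, (f 0).choose a = (n + k).choose (a + k) := by
  induction k generalizing n a with
  | zero => simp [antidiagonalTuple_one]
  | succ k ih =>
    have card_eq (j : ℕ) : #(antidiagonalTuple (k + 1) j) = (j + k).choose k := by
      simpa using ih j 0
    refine (sum_antidiagonalTuple_apply_zero _ _ (·.choose a)).trans ?_
    simp only [card_eq, smul_eq_mul, mul_comm ((_ : ℕ).choose k)]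
    exact sum_antidiagonal_choose_mul_add_choose k n a

end Finset.Nat

/-- The sum of `n_1²` over all `m`-tuples of nonnegative integers summing to `n`
equals `binomial (m+n-1) (m+1) + binomial (m+n) (m+1)`. -/
theorem stmt4 (m n : ℕ) (hm : 2 ≤ m) :
    ∑ f ∈ Finset.Nat.antidiagonalTuple m n, (f ⟨0, by omega⟩) ^ 2 =
      (m + n - 1).choose (m + 1) + (m + n).choose (m + 1) := by
  obtain ⟨k, rfl⟩ : ∃ k, m = k + 2 := ⟨m - 2, by omega⟩
  simp only [Fin.zero_eta, Nat.sq_eq_choose_one_add_two_mul_choose_two, sum_add_distrib,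
    ← mul_sum, Nat.sum_antidiagonalTuple_choose_apply_zero]
  rw [show k + 2 + n - 1 = n + (k + 1) by omega, show k + 2 + n = n + (k + 1) + 1 by omega,
    Nat.choose_succ_succ' (n + (k + 1))]
  ring_nf
end

section
/- Let m, n be positive integers, M = binomial(m+n-1, n). Define I_o(ρ) = Σ_{i=1}^{m²} tr(ρ O'_i)² and I_{t'}(ρ) = Σ_{i=1}^{m²-1} tr(ρ H_i)² where {H_i} are the normalized traceless tangent basis elements O_i/√binomial(m+n, m+1). Then for any n-photon density matrix ρ: I_{t'}(ρ) = (I_o(ρ) - n²/m)/binomial(m+n, m+1), and I_t(ρ) := I_{t'}(ρ) + 1/M = I_o(ρ)/binomial(m+n, m+1) - (n-1)/binomial(m+n, m). -/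
open Matrix
open scoped ComplexOrder

/-- The `n`-photon `m`-mode Fock basis: tuples of occupation numbers summing to `n`. -/
abbrev FockT (m n : ℕ) := {f : Fin m → ℕ // ∑ i, f i = n}

instance (m n : ℕ) : Fintype (FockT m n) :=
  Fintype.subtype (Finset.Nat.antidiagonalTuple m n) fun _ =>
    Finset.Nat.mem_antidiagonalTuple

/-- Matrix element `⟨B| a_k† a_l |A⟩` on Fock states. -/
noncomputable def ampl {m : ℕ} (A B : Fin m → ℕ) (k l : Fin m) : ℝ :=
  if 1 ≤ A l ∧ B = Function.update (Function.update A l (A l - 1)) k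
      ((Function.update A l (A l - 1)) k + 1)
  then Real.sqrt (A l) * Real.sqrt ((Function.update A l (A l - 1)) k + 1) else 0

/-- The Jordan–Schwinger image `Σ_{k,l} h_{kl} a_k† a_l` on the `n`-photon sector. -/
noncomputable def JS {m : ℕ} (n : ℕ) (h : Matrix (Fin m) (Fin m) ℂ) :
    Matrix (FockT m n) (FockT m n) ℂ :=
  Matrix.of fun B A => ∑ k, ∑ l, h k l * (ampl A.1 B.1 k l : ℝ)

/-- Generator of `(a_j† a_k + a_k† a_j)/√2`. -/
noncomputable def symGen {m : ℕ} (j k : Fin m) : Matrix (Fin m) (Fin m) ℂ :=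
  ((Real.sqrt 2)⁻¹ : ℂ) • (Matrix.single j k 1 + Matrix.single k j 1)

/-- Generator of `i(a_j† a_k - a_k† a_j)/√2`. -/
noncomputable def asymGen {m : ℕ} (j k : Fin m) : Matrix (Fin m) (Fin m) ℂ :=
  (Complex.I * ((Real.sqrt 2)⁻¹ : ℂ)) • (Matrix.single j k 1 - Matrix.single k j 1)

/-- Generator of `(Σ_{j=1}^{l+1} n̂_j - (l+1) n̂_{l+2})/√((l+1)(l+2))` (0-based `l`). -/
noncomputable def diagGen {m : ℕ} (l : Fin (m - 1)) : Matrix (Fin m) (Fin m) ℂ :=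
  ((Real.sqrt ((l.1 + 1) * (l.1 + 2)))⁻¹ : ℂ) •
    Matrix.diagonal (fun i : Fin m => if (i : ℕ) < l.1 + 1 then 1
      else if (i : ℕ) = l.1 + 1 then -((l.1 + 1 : ℕ) : ℂ) else 0)

/-- The observable invariant `I_o(ρ) = Σ_{i=1}^{m²} tr(ρ O'_i)²` from the observables
`n̂_j`, `(a_j†a_k + a_k†a_j)/√2`, `i(a_j†a_k - a_k†a_j)/√2`. -/
noncomputable def Io (m n : ℕ) (ρ : Matrix (FockT m n) (FockT m n) ℂ) : ℝ :=
  (∑ j : Fin m, (((ρ * JS n (Matrix.single j j 1)).trace).re) ^ 2) +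
  (∑ p : {p : Fin m × Fin m // p.1 < p.2},
    (((ρ * JS n (symGen p.1.1 p.1.2)).trace).re) ^ 2) +
  (∑ p : {p : Fin m × Fin m // p.1 < p.2},
    (((ρ * JS n (asymGen p.1.1 p.1.2)).trace).re) ^ 2)

/-- The traceless tangent invariant `I_{t'}(ρ) = Σ_{i=1}^{m²-1} tr(ρ H_i)²`, where
`H_i = O_i / √(binom (m+n) (m+1))` are the normalized traceless tangent observables. -/
noncomputable def Itp (m n : ℕ) (ρ : Matrix (FockT m n) (FockT m n) ℂ) : ℝ :=
  (∑ l : Fin (m - 1),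
    (((ρ * ((((Real.sqrt ((m + n).choose (m + 1)))⁻¹ : ℝ) : ℂ) •
      JS n (diagGen l))).trace).re) ^ 2) +
  (∑ p : {p : Fin m × Fin m // p.1 < p.2},
    (((ρ * ((((Real.sqrt ((m + n).choose (m + 1)))⁻¹ : ℝ) : ℂ) •
      JS n (symGen p.1.1 p.1.2))).trace).re) ^ 2) +
  (∑ p : {p : Fin m × Fin m // p.1 < p.2},
    (((ρ * ((((Real.sqrt ((m + n).choose (m + 1)))⁻¹ : ℝ) : ℂ) •
      JS n (asymGen p.1.1 p.1.2))).trace).re) ^ 2)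

/-!
The off-diagonal observables enter `I_{t'}` and `I_o` identically, up to the normalization
`1 / binom(m+n, m+1)`, so only the diagonal parts have to be compared. The normalized Helmert
vectors `(1, …, 1, -l, 0, …, 0) / √(l(l+1))` and `(1, …, 1) / √m` form an orthonormal basis of
`ℝ^m`, hence `Σ_j ⟨n̂_j⟩² = (Σ_j ⟨n̂_j⟩)² / m + Σ_l ⟨H_l⟩²`, and `Σ_j ⟨n̂_j⟩ = n tr ρ = n`.
The formula for `I_t` is then binomial-coefficient arithmetic.
-/

lemma Matrix.trace_mul_diagonal {ι R : Type*} [Fintype ι] [DecidableEq ι] [Semiring R]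
    (ρ : Matrix ι ι R) (d : ι → R) :
    (ρ * diagonal d).trace = ∑ i, ρ i i * d i := by
  simp [trace, mul_diagonal]

lemma Matrix.re_trace_mul_ofReal_smul {ι : Type*} [Fintype ι] (ρ X : Matrix ι ι ℂ) (c : ℝ) :
    (ρ * ((c : ℂ) • X)).trace.re = c * (ρ * X).trace.re := by
  rw [Matrix.mul_smul, trace_smul, smul_eq_mul, Complex.re_ofReal_mul]

lemma Finset.sum_range_helmert_sq (F : ℕ → ℝ) (m : ℕ) :
    ∑ l ∈ Finset.range m, (∑ j ∈ Finset.range (l + 1), F j - (l + 1) * F (l + 1)) ^ 2 /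
        ((l + 1) * (l + 2)) =
      ∑ j ∈ Finset.range (m + 1), F j ^ 2 - (∑ j ∈ Finset.range (m + 1), F j) ^ 2 / (m + 1) := by
  induction m with
  | zero => simp
  | succ k ih =>
    rw [Finset.sum_range_succ, ih, Finset.sum_range_succ F (k + 1),
      Finset.sum_range_succ (fun j => F j ^ 2) (k + 1)]
    push_cast
    field_simp
    ring

lemma Finset.sum_range_helmert_coeff_mul (F : ℕ → ℝ) {l m : ℕ} (hl : l + 1 < m) :
    ∑ i ∈ Finset.range m,
        (if i < l + 1 then 1 else if i = l + 1 then -((l + 1 : ℕ) : ℝ) else 0) * F i =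
      ∑ i ∈ Finset.range (l + 1), F i - (l + 1) * F (l + 1) := by
  rw [← Finset.sum_range_add_sum_Ico _ hl, Finset.sum_range_succ,
    Finset.sum_congr rfl fun i hi => by rw [if_pos (Finset.mem_range.1 hi), one_mul],
    Finset.sum_eq_zero (s := Finset.Ico (l + 2) m) fun i hi => by
      rw [Finset.mem_Ico] at hi; rw [if_neg (by omega), if_neg (by omega), zero_mul]]
  simp only [lt_self_iff_false, if_false, if_true, add_zero]
  push_cast
  ring

lemma one_div_choose_pred_eq {m n : ℕ} (hm : 0 < m) (hn : 0 < n) :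
    1 / ((m + n - 1).choose n : ℝ) =
      (n : ℝ) ^ 2 / m / (m + n).choose (m + 1) - ((n : ℝ) - 1) / (m + n).choose m := by
  have hC : ((m + n).choose (m + 1) : ℝ) * (m + 1) = (m + n).choose m * n := by
    have := Nat.choose_succ_right_eq (m + n) m
    rw [Nat.add_sub_cancel_left] at this
    exact_mod_cast this
  have hM : ((m + n - 1).choose n : ℝ) * (m + n) = (m + n).choose m * m := by
    have := Nat.choose_mul_succ_eq (m + n - 1) n
    rw [Nat.sub_add_cancel (by omega), ← Nat.choose_symm_add, Nat.add_sub_cancel] at this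
    exact_mod_cast this
  have hD : (0 : ℝ) < (m + n).choose m := by exact_mod_cast Nat.choose_pos (by omega)
  have hC0 : (0 : ℝ) < (m + n).choose (m + 1) := by exact_mod_cast Nat.choose_pos (by omega)
  have hM0 : (0 : ℝ) < (m + n - 1).choose n := by exact_mod_cast Nat.choose_pos (by omega)
  have hm0 : (0 : ℝ) < m := by exact_mod_cast hm
  field_simp
  linear_combination (n * (m + n - 1).choose n : ℝ) * hC - ((m + n).choose (m + 1) : ℝ) * hM

section Fock

variable {m n : ℕ}

lemma ampl_self (A B : Fin m → ℕ) (j : Fin m) :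
    ampl A B j j = if B = A then (A j : ℝ) else 0 := by
  unfold ampl
  rcases Nat.eq_zero_or_pos (A j) with h0 | hpos
  · simp [h0]
  · have hsucc : A j - 1 + 1 = A j := Nat.succ_pred_eq_of_pos hpos
    have hsucc' : ((A j - 1 : ℕ) : ℝ) + 1 = A j := by rw [Nat.cast_sub hpos]; ring
    simp only [Function.update_self, Function.update_idem, hsucc, Function.update_eq_self,
      Nat.one_le_iff_ne_zero.2 hpos.ne', true_and, hsucc']
    split_ifs
    · exact Real.mul_self_sqrt (Nat.cast_nonneg _)
    · rfl

lemma JS_diagonal (d : Fin m → ℂ) :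
    JS n (diagonal d) = diagonal fun A : FockT m n => ∑ k, d k * A.1 k := by
  ext B A
  simp only [JS, of_apply, diagonal_apply]
  rw [Finset.sum_congr rfl fun k _ => Finset.sum_eq_single k
    (fun l _ hl => by simp [Ne.symm hl]) (by simp)]
  by_cases h : B = A
  · subst h
    simp [ampl_self]
  · have h' : B.1 ≠ A.1 := fun hc => h (Subtype.ext hc)
    simp [h, h', ampl_self]

lemma JS_smul (c : ℂ) (h : Matrix (Fin m) (Fin m) ℂ) : JS n (c • h) = c • JS n h := by
  ext B A
  simp [JS, Finset.mul_sum, mul_assoc]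

lemma trace_mul_JS_diagonal (ρ : Matrix (FockT m n) (FockT m n) ℂ) (d : Fin m → ℂ) :
    (ρ * JS n (diagonal d)).trace = ∑ k, d k * (ρ * JS n (single k k 1)).trace := by
  simp only [← diagonal_single, JS_diagonal, trace_mul_diagonal, Finset.mul_sum]
  rw [Finset.sum_comm]
  refine Finset.sum_congr rfl fun k _ => Finset.sum_congr rfl fun A _ => ?_
  simp [Pi.single_apply]
  ring

lemma sum_trace_mul_JS_single (ρ : Matrix (FockT m n) (FockT m n) ℂ) :
    ∑ k, (ρ * JS n (single k k 1)).trace = n * ρ.trace := by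
  have h := trace_mul_JS_diagonal ρ fun _ => 1
  simp only [one_mul, JS_diagonal, trace_mul_diagonal] at h
  rw [← h, trace, Finset.mul_sum]
  refine Finset.sum_congr rfl fun A _ => ?_
  rw [diag_apply, ← Nat.cast_sum, A.2, mul_comm]

/-- The mean occupation `⟨n̂_{j+1}⟩` of the `(j+1)`-st mode, extended by zero to `j ≥ m`. -/
noncomputable def meanOcc (ρ : Matrix (FockT m n) (FockT m n) ℂ) (j : ℕ) : ℝ :=
  if h : j < m then (ρ * JS n (single ⟨j, h⟩ ⟨j, h⟩ 1)).trace.re else 0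

lemma sum_range_comp_meanOcc (ρ : Matrix (FockT m n) (FockT m n) ℂ) (g : ℝ → ℝ) :
    ∑ j ∈ Finset.range m, g (meanOcc ρ j) =
      ∑ k : Fin m, g (ρ * JS n (single k k 1)).trace.re := by
  rw [← Fin.sum_univ_eq_sum_range]
  simp [meanOcc]

lemma sum_range_meanOcc (ρ : Matrix (FockT m n) (FockT m n) ℂ) :
    ∑ j ∈ Finset.range m, meanOcc ρ j = n * ρ.trace.re := by
  rw [← Complex.re_ofReal_mul, Complex.ofReal_natCast, ← sum_trace_mul_JS_single, Complex.re_sum]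
  exact sum_range_comp_meanOcc ρ id

lemma re_trace_mul_JS_diagGen (ρ : Matrix (FockT m n) (FockT m n) ℂ) (l : Fin (m - 1)) :
    (ρ * JS n (diagGen l)).trace.re = (√((l + 1) * (l + 2)))⁻¹ *
      (∑ j ∈ Finset.range (l + 1), meanOcc ρ j - (l + 1) * meanOcc ρ (l + 1)) := by
  rw [diagGen, JS_smul, ← Complex.ofReal_inv, re_trace_mul_ofReal_smul, trace_mul_JS_diagonal,
    Complex.re_sum, ← Finset.sum_range_helmert_coeff_mul _ (m := m) (by omega),
    ← Fin.sum_univ_eq_sum_range]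
  push_cast
  congr 1
  refine Finset.sum_congr rfl fun k _ => ?_
  simp only [meanOcc, dif_pos k.2]
  split_ifs <;> simp

lemma sum_sq_re_trace_mul_JS_diagGen (ρ : Matrix (FockT m n) (FockT m n) ℂ) :
    ∑ l : Fin (m - 1), (ρ * JS n (diagGen l)).trace.re ^ 2 =
      ∑ j ∈ Finset.range m, meanOcc ρ j ^ 2 - (n * ρ.trace.re) ^ 2 / m := by
  rw [← sum_range_meanOcc]
  cases m with
  | zero => simp
  | succ k =>
    simp (disch := positivity) only [re_trace_mul_JS_diagGen, inv_mul_eq_div, div_pow,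
      Real.sq_sqrt]
    rw [Fin.sum_univ_eq_sum_range (fun l => (∑ j ∈ Finset.range (l + 1), meanOcc ρ j -
      (l + 1) * meanOcc ρ (l + 1)) ^ 2 / ((l + 1) * (l + 2))), Nat.add_sub_cancel,
      Finset.sum_range_helmert_sq, Nat.cast_succ]

noncomputable def offDiagSqSum (ρ : Matrix (FockT m n) (FockT m n) ℂ) : ℝ :=
  (∑ p : {p : Fin m × Fin m // p.1 < p.2}, (ρ * JS n (symGen p.1.1 p.1.2)).trace.re ^ 2) +
    ∑ p : {p : Fin m × Fin m // p.1 < p.2}, (ρ * JS n (asymGen p.1.1 p.1.2)).trace.re ^ 2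

lemma Itp_eq_div_choose (ρ : Matrix (FockT m n) (FockT m n) ℂ) :
    Itp m n ρ = (∑ l : Fin (m - 1), (ρ * JS n (diagGen l)).trace.re ^ 2 + offDiagSqSum ρ) /
      (m + n).choose (m + 1) := by
  simp only [Itp, offDiagSqSum, re_trace_mul_ofReal_smul, mul_pow, inv_pow,
    Real.sq_sqrt (Nat.cast_nonneg _), ← Finset.mul_sum]
  ring

lemma Io_eq (ρ : Matrix (FockT m n) (FockT m n) ℂ) :
    Io m n ρ = ∑ j ∈ Finset.range m, meanOcc ρ j ^ 2 + offDiagSqSum ρ := by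
  rw [Io, offDiagSqSum, sum_range_comp_meanOcc ρ (· ^ 2), add_assoc]

end Fock

theorem stmt15_general (m n : ℕ) (hm : 0 < m) (hn : 0 < n)
    (ρ : Matrix (FockT m n) (FockT m n) ℂ)
    (htr : ρ.trace = 1) :
    Itp m n ρ = (Io m n ρ - (n : ℝ) ^ 2 / m) / ((m + n).choose (m + 1)) ∧
    Itp m n ρ + 1 / (((m + n - 1).choose n : ℕ) : ℝ) =
      Io m n ρ / ((m + n).choose (m + 1)) - ((n : ℝ) - 1) / ((m + n).choose m) := by
  have hdiag := sum_sq_re_trace_mul_JS_diagGen ρ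
  rw [htr, Complex.one_re, mul_one] at hdiag
  have hItp : Itp m n ρ = (Io m n ρ - (n : ℝ) ^ 2 / m) / ((m + n).choose (m + 1)) := by
    rw [Itp_eq_div_choose, hdiag, Io_eq]
    ring
  refine ⟨hItp, ?_⟩
  rw [hItp, one_div_choose_pred_eq hm hn]
  ring

/-- `I_{t'} = (I_o - n²/m)/binom(m+n, m+1)` and
`I_t = I_{t'} + 1/M = I_o/binom(m+n, m+1) - (n-1)/binom(m+n, m)`. -/
theorem stmt15 (m n : ℕ) (hm : 0 < m) (hn : 0 < n)
    (ρ : Matrix (FockT m n) (FockT m n) ℂ)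
    (hρ : ρ.PosSemidef) (htr : ρ.trace = 1) :
    Itp m n ρ = (Io m n ρ - (n : ℝ) ^ 2 / m) / ((m + n).choose (m + 1)) ∧
    Itp m n ρ + 1 / (((m + n - 1).choose n : ℕ) : ℝ) =
      Io m n ρ / ((m + n).choose (m + 1)) - ((n : ℝ) - 1) / ((m + n).choose m) :=
  stmt15_general m n hm hn ρ htr
end

section
/- Suppose dφ: H(m) → H(M) is linear, satisfies dφ(S h S†) = φ(S) dφ(h) φ(S)† for a group homomorphism φ, and satisfies tr(dφ(h_i) dφ(h_j)) = c·δ_{ij} for an orthonormal basis {h_i} of H(m) and a constant c > 0. Define H_i = dφ(h_i)/√c. Then for all 0 ≤ i,j < m²: tr(H_i φ(S) H_j φ(S)†) = tr(h_i S h_j S†). In particular, the tangent block of the HTM of V = φ(S) equals the HTM of S. -/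
open Matrix

/-!
Conjugating `h_j` by a unitary `S` gives a Hermitian matrix, so `S h_j S† = ∑ₖ aₖ hₖ` with real
`aₖ`, and orthonormality reads off `tr(h_i S h_j S†) = a_i`. Equivariance and real linearity
turn the same expansion into `φ(S) dφ(h_j) φ(S)† = ∑ₖ aₖ dφ(hₖ)`, whose pairing with `dφ(h_i)` is
`c a_i`; the factor `1/√c` on each side cancels `c`.
-/

section TracePairing

variable {ι n p : Type*} [Fintype ι] [DecidableEq ι] [Fintype n] [Fintype p]

theorem trace_mul_sum_smul_of_orthogonal {v : ι → Matrix n n ℂ} {d : ℂ}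
    (hv : ∀ i k, (v i * v k).trace = if i = k then d else 0) (a : ι → ℝ) (i : ι) :
    (v i * ∑ k, a k • v k).trace = a i * d := by
  simp_rw [Finset.mul_sum, mul_smul_comm, trace_sum, trace_smul, hv, Complex.real_smul]
  simp

theorem trace_mul_map_of_mem_span {v : ι → Matrix n n ℂ} (L : Matrix n n ℂ →ₗ[ℝ] Matrix p p ℂ)
    {c : ℂ} (hv : ∀ i k, (v i * v k).trace = if i = k then 1 else 0)
    (hLv : ∀ i k, (L (v i) * L (v k)).trace = if i = k then c else 0)
    {A : Matrix n n ℂ} (hA : A ∈ Submodule.span ℝ (Set.range v)) (i : ι) :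
    (L (v i) * L A).trace = c * (v i * A).trace := by
  obtain ⟨a, rfl⟩ := (Submodule.mem_span_range_iff_exists_fun ℝ).mp hA
  simp_rw [map_sum, map_smul, trace_mul_sum_smul_of_orthogonal hv,
    trace_mul_sum_smul_of_orthogonal hLv]
  ring

end TracePairing

theorem inv_sqrt_mul_inv_sqrt_mul_self {c : ℝ} (hc : 0 < c) :
    (Real.sqrt c)⁻¹ * (Real.sqrt c)⁻¹ * c = 1 := by
  rw [← mul_inv, Real.mul_self_sqrt hc.le, inv_mul_cancel₀ hc.ne']

/-- If a real-linear `dφ` is equivariant (`dφ(S h S†) = φ(S) dφ(h) φ(S)†`) for a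
homomorphism `φ` on unitaries and maps an orthonormal Hermitian basis `{h_i}` of
`H(m)` to matrices with `tr(dφ(h_i) dφ(h_j)) = c δ_{ij}`, then with
`H_i = dφ(h_i)/√c` one has `tr(H_i φ(S) H_j φ(S)†) = tr(h_i S h_j S†)`: the
tangent block of the HTM of `φ(S)` equals the HTM of `S`. -/
theorem stmt18 (m M : ℕ)
    (φ : Matrix (Fin m) (Fin m) ℂ → Matrix (Fin M) (Fin M) ℂ)
    (dφ : Matrix (Fin m) (Fin m) ℂ →ₗ[ℝ] Matrix (Fin M) (Fin M) ℂ)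
    (hequiv : ∀ S ∈ Matrix.unitaryGroup (Fin m) ℂ,
      ∀ A : Matrix (Fin m) (Fin m) ℂ, A.IsHermitian →
        dφ (S * A * Sᴴ) = φ S * dφ A * (φ S)ᴴ)
    (h : Fin (m ^ 2) → Matrix (Fin m) (Fin m) ℂ)
    (hherm : ∀ i, (h i).IsHermitian)
    (horth : ∀ i j, (h i * h j).trace = if i = j then 1 else 0)
    (hspan : ∀ A : Matrix (Fin m) (Fin m) ℂ, A.IsHermitian →
      A ∈ Submodule.span ℝ (Set.range h))
    (c : ℝ) (hc : 0 < c)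
    (hdorth : ∀ i j, (dφ (h i) * dφ (h j)).trace = if i = j then (c : ℂ) else 0) :
    ∀ S ∈ Matrix.unitaryGroup (Fin m) ℂ, ∀ i j,
      (((((Real.sqrt c)⁻¹ : ℝ) : ℂ) • dφ (h i)) * φ S *
          ((((Real.sqrt c)⁻¹ : ℝ) : ℂ) • dφ (h j)) * (φ S)ᴴ).trace =
        (h i * S * h j * Sᴴ).trace := by
  intro S hS i j
  have hconj : (S * h j * Sᴴ).IsHermitian := isHermitian_mul_mul_conjTranspose S (hherm j)
  have hpair := trace_mul_map_of_mem_span dφ horth hdorth (hspan _ hconj) i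
  rw [hequiv S hS (h j) (hherm j)] at hpair
  have hscalar : ((Real.sqrt c)⁻¹ : ℂ) * (Real.sqrt c)⁻¹ * c = 1 := by
    exact_mod_cast inv_sqrt_mul_inv_sqrt_mul_self hc
  calc _ = ((Real.sqrt c)⁻¹ : ℂ) * (Real.sqrt c)⁻¹ *
          (dφ (h i) * (φ S * dφ (h j) * (φ S)ᴴ)).trace := by
        simp only [Matrix.smul_mul, Matrix.mul_smul, trace_smul, smul_eq_mul, Matrix.mul_assoc]
        push_cast
        ring
    _ = (h i * S * h j * Sᴴ).trace := by
        rw [hpair, ← mul_assoc, hscalar, one_mul]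
        simp only [Matrix.mul_assoc]
end
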